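/- Let |q| < 1, |ρ| < 1, and let n ≥ 0 be an integer. Then for all real x, y: ∏_{j=0}^{n-1} ω(x√(1-q)/2, y√(1-q)/2 | ρ q^j) = (ρ²;q)_{2n} · Σ_{k=0}^{n} (-1)^k [n choose k]_q q^{k(k-1)/2} (1-q)^k ρ^k Q_{k,k}(x,y|ρ,q). -/

import Mathlib

open Finset MeasureTheory

noncomputable section

/-- [n]_q = 1 + q + ... + q^{n-1} -/
def qNat (q : ℝ) (n : ℕ) : ℝ := ∑ j ∈ Finset.range n, q ^ j

/-- [n]_q! -/
def qFact (q : ℝ) : ℕ → ℝ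
  | 0 => 1
  | n + 1 => qFact q n * qNat q (n + 1)

/-- q-binomial coefficient -/
def qBinom (q : ℝ) (n k : ℕ) : ℝ :=
  if k ≤ n then qFact q n / (qFact q (n - k) * qFact q k) else 0

/-- q-Pochhammer symbol (a;q)_n -/
def qPoch (a q : ℝ) (n : ℕ) : ℝ := ∏ j ∈ Finset.range n, (1 - a * q ^ j)

/-- q-Pochhammer symbol (a;q)_∞ -/
def qPochInf (a q : ℝ) : ℝ := ∏' j : ℕ, (1 - a * q ^ j)

/-- continuous q-Hermite polynomials H_n(x|q) -/
def qHermite (q : ℝ) : ℕ → ℝ → ℝ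
  | 0, _ => 1
  | 1, x => x
  | n + 2, x => x * qHermite q (n + 1) x - qNat q (n + 1) * qHermite q n x

/-- big q-Hermite polynomials H_n(x|a,q) -/
def bigqHermite (q a : ℝ) : ℕ → ℝ → ℝ
  | 0, _ => 1
  | 1, x => x - a
  | n + 2, x => (x - a * q ^ (n + 1)) * bigqHermite q a (n + 1) x -
      qNat q (n + 1) * bigqHermite q a n x

/-- rescaled Al-Salam--Chihara polynomials P_n(x|y,ρ,q) -/
def ascP (q y ρ : ℝ) : ℕ → ℝ → ℝ
  | 0, _ => 1
  | 1, x => x - ρ * y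
  | n + 2, x => (x - ρ * y * q ^ (n + 1)) * ascP q y ρ (n + 1) x -
      qNat q (n + 1) * (1 - ρ ^ 2 * q ^ n) * ascP q y ρ n x

/-- generating function φ_H(x|t,q) of the q-Hermite polynomials -/
def phiH (q t x : ℝ) : ℝ := ∑' n : ℕ, t ^ n / qFact q n * qHermite q n x

/-- γ_{i,j}(x,y|ρ,q) -/
def gammaPM (q ρ : ℝ) (i j : ℕ) (x y : ℝ) : ℝ :=
  ∑' n : ℕ, ρ ^ n / qFact q n * qHermite q (n + i) x * qHermite q (n + j) y

/-- the polynomials Q_{i,j}(x,y|ρ,q) -/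
def Qpoly (q ρ : ℝ) (i j : ℕ) (x y : ℝ) : ℝ :=
  ∑ s ∈ Finset.range (j + 1),
    (-1 : ℝ) ^ s * q ^ (s * (s - 1) / 2) * qBinom q j s * ρ ^ s * qHermite q (j - s) y *
      ascP q y ρ (i + s) x / qPoch (ρ ^ 2) q (i + s)

/-- the interval S(q) = [-2/√(1-q), 2/√(1-q)] -/
def Sq (q : ℝ) : Set ℝ := Set.Icc (-(2 / Real.sqrt (1 - q))) (2 / Real.sqrt (1 - q))

/-- ω(x,y|ρ) -/
def omegaPM (x y ρ : ℝ) : ℝ :=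
  (1 - ρ ^ 2) ^ 2 - 4 * ρ * (1 + ρ ^ 2) * x * y + 4 * ρ ^ 2 * (x ^ 2 + y ^ 2)

/-- l(x|a) -/
def lPM (x a : ℝ) : ℝ := (1 + a) ^ 2 - 4 * a * x ^ 2

/-- the q-Normal density f_N(x|q) -/
def fN (q x : ℝ) : ℝ :=
  Real.sqrt ((1 - q) * (4 - (1 - q) * x ^ 2)) * qPochInf q q / (2 * Real.pi) *
    ∏' j : ℕ, lPM (x * Real.sqrt (1 - q) / 2) (q ^ (j + 1))

/-- the (q,ρ)-Conditional Normal density f_CN(x|y,ρ,q) -/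
def fCN (q ρ x y : ℝ) : ℝ :=
  fN q x * qPochInf (ρ ^ 2) q /
    ∏' j : ℕ, omegaPM (x * Real.sqrt (1 - q) / 2) (y * Real.sqrt (1 - q) / 2) (ρ * q ^ j)

/-- the (ρ,q)-bivariate Normal density f_{2D}(x,y|ρ,q) -/
def f2D (q ρ x y : ℝ) : ℝ := fCN q ρ x y * fN q y


/-!
Induction on `n`, replacing `ρ` by `ρq`: the product for `ρ` is `ω(·|ρ)` times the product
for `ρq`, and `(ρ²;q)_{2n+2} = (1-ρ²)(1-ρ²q)(ρ²q²;q)_{2n}`. The step rests on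
`ω(ρ) Q_{i,j}(ρq) = (1-ρ²)(1-ρ²q) (Q_{i,j}(ρ) - (1-q)ρ Q_{i+1,j+1}(ρ))`, which comes from
expanding `ω(ρ) P_m(x|y,ρq,q)` in `P_m, P_{m+1}, P_{m+2}` at `ρ` (both sides obey the same
three-term recurrence in `m`) together with the recurrence `y H_m = H_{m+1} + [m]_q H_{m-1}`.
Both there and in the induction step the resulting sums are recombined by summation by parts,
using the `q`-Pascal rule `[n+1, k+1]_q = q^{k+1} [n, k+1]_q + [n, k]_q`.
-/

section

variable {q : ℝ}

theorem qNat_succ (n : ℕ) : qNat q (n + 1) = qNat q n + q ^ n := sum_range_succ _ _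

theorem one_sub_mul_qNat (n : ℕ) : (1 - q) * qNat q n = 1 - q ^ n := by
  rw [qNat, ← geom_sum_mul_neg, mul_comm]

theorem qNat_add (a b : ℕ) : qNat q (a + b) = qNat q a + q ^ a * qNat q b := by
  simp only [qNat, sum_range_add, pow_add, mul_sum]

theorem qNat_succ_pos (hq : -1 < q) (n : ℕ) : 0 < qNat q (n + 1) := by
  rcases lt_or_ge q 1 with h | h
  · have hpow : q ^ (n + 1) < 1 := by
      have : |q ^ (n + 1)| < 1 := by
        rw [abs_pow]; exact pow_lt_one₀ (abs_nonneg q) (abs_lt.mpr ⟨hq, h⟩) n.succ_ne_zero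
      exact (abs_lt.mp this).2
    have := one_sub_mul_qNat (q := q) (n + 1)
    nlinarith
  · rw [qNat_succ]
    exact add_pos_of_nonneg_of_pos (sum_nonneg fun j _ => by positivity) (by positivity)

theorem qFact_succ (n : ℕ) : qFact q (n + 1) = qFact q n * qNat q (n + 1) := rfl

theorem qFact_pos (hq : -1 < q) (n : ℕ) : 0 < qFact q n := by
  induction n with
  | zero => exact one_pos
  | succ m ih => exact mul_pos ih (qNat_succ_pos hq m)

theorem qBinom_of_lt {n k : ℕ} (h : n < k) : qBinom q n k = 0 := if_neg (by omega)

theorem qBinom_zero_right (hq : -1 < q) (n : ℕ) : qBinom q n 0 = 1 := by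
  simp [qBinom, qFact, (qFact_pos hq n).ne']

theorem qBinom_succ_mul_qNat (hq : -1 < q) (k s : ℕ) :
    qBinom q k (s + 1) * qNat q (s + 1) = qBinom q k s * qNat q (k - s) := by
  rcases lt_or_ge s k with h | h
  · obtain ⟨d, rfl⟩ : ∃ d, k = s + 1 + d := ⟨k - (s + 1), by omega⟩
    rw [qBinom, qBinom, if_pos (by omega), if_pos (by omega),
      show s + 1 + d - (s + 1) = d by omega, show s + 1 + d - s = d + 1 by omega,
      qFact_succ, qFact_succ]
    have := (qFact_pos hq d).ne'
    have := (qFact_pos hq s).ne'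
    have := (qNat_succ_pos hq s).ne'
    have := (qNat_succ_pos hq d).ne'
    field_simp
  · rw [qBinom_of_lt (by omega), show k - s = 0 by omega]
    simp [qNat]

theorem qBinom_succ_succ (hq : -1 < q) (n k : ℕ) :
    qBinom q (n + 1) (k + 1) = q ^ (k + 1) * qBinom q n (k + 1) + qBinom q n k := by
  rcases lt_trichotomy k n with h | rfl | h
  · obtain ⟨d, rfl⟩ : ∃ d, n = k + 1 + d := ⟨n - (k + 1), by omega⟩
    rw [qBinom, qBinom, qBinom, if_pos (by omega), if_pos (by omega), if_pos (by omega),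
      show k + 1 + d + 1 - (k + 1) = d + 1 by omega, show k + 1 + d - (k + 1) = d by omega,
      show k + 1 + d - k = d + 1 by omega, qFact_succ, qFact_succ, qFact_succ,
      show k + 1 + d + 1 = (k + 1) + (d + 1) by omega, qNat_add]
    have := (qFact_pos hq d).ne'
    have := (qFact_pos hq k).ne'
    have := (qFact_pos hq (k + 1 + d)).ne'
    have := (qNat_succ_pos hq k).ne'
    have := (qNat_succ_pos hq d).ne'
    field_simp
    ring
  · rw [qBinom_of_lt (n := k) (k := k + 1) (by omega)]
    simp [qBinom, qFact, (qFact_pos hq k).ne', (qNat_succ_pos hq k).ne']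
  · rw [qBinom_of_lt (by omega), qBinom_of_lt (by omega), qBinom_of_lt h]
    ring

theorem sum_mul_add_mul_succ_eq_sum_mul {R : Type*} [NonUnitalNonAssocSemiring R]
    {a b e w : ℕ → R} (n : ℕ) (h0 : a 0 = b 0) (hs : ∀ k, a (k + 1) = b (k + 1) + e k)
    (hb : b (n + 1) = 0) :
    ∑ k ∈ range (n + 1), (b k * w k + e k * w (k + 1)) =
      ∑ k ∈ range (n + 2), a k * w k := by
  have hb' : ∑ k ∈ range (n + 2), b k * w k = ∑ k ∈ range (n + 1), b k * w k := by
    rw [sum_range_succ, hb, zero_mul, add_zero]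
  rw [sum_range_succ' (fun k => a k * w k), h0, sum_add_distrib, ← hb',
    sum_range_succ' (fun k => b k * w k)]
  simp only [hs, add_mul, sum_add_distrib]
  abel

def altQBinom (q : ℝ) (n k : ℕ) : ℝ := (-1) ^ k * q ^ (k * (k - 1) / 2) * qBinom q n k

theorem altQBinom_of_lt {n k : ℕ} (h : n < k) : altQBinom q n k = 0 := by
  rw [altQBinom, qBinom_of_lt h, mul_zero]

theorem altQBinom_zero_right (hq : -1 < q) (n : ℕ) : altQBinom q n 0 = 1 := by
  simp [altQBinom, qBinom_zero_right hq]

theorem altQBinom_succ_succ (hq : -1 < q) (n k : ℕ) :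
    altQBinom q (n + 1) (k + 1) =
      q ^ (k + 1) * altQBinom q n (k + 1) - q ^ k * altQBinom q n k := by
  simp only [altQBinom, Nat.triangle_succ, qBinom_succ_succ hq, pow_succ, pow_add]
  ring

theorem altQBinom_succ_mul_one_sub_pow (hq : -1 < q) (n k : ℕ) :
    altQBinom q n (k + 1) * (1 - q ^ (k + 1)) =
      -((1 - q) * qNat q (n - k) * q ^ k * altQBinom q n k) := by
  rw [altQBinom, altQBinom, Nat.triangle_succ, ← one_sub_mul_qNat]
  linear_combination (-(-1 : ℝ) ^ k * q ^ (k * (k - 1) / 2) * q ^ k * (1 - q)) *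
    qBinom_succ_mul_qNat hq n k

theorem sum_altQBinom_mul_sub (hq : -1 < q) (n : ℕ) (w : ℕ → ℝ) :
    ∑ k ∈ range (n + 1), q ^ k * altQBinom q n k * (w k - w (k + 1)) =
      ∑ k ∈ range (n + 2), altQBinom q (n + 1) k * w k := by
  rw [← sum_mul_add_mul_succ_eq_sum_mul (b := fun k => q ^ k * altQBinom q n k)
    (e := fun k => -(q ^ k * altQBinom q n k)) n]
  · exact sum_congr rfl fun k _ => by ring
  · simp [altQBinom_zero_right hq]
  · intro k
    rw [altQBinom_succ_succ hq]
    ring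
  · simp [altQBinom_of_lt (Nat.lt_succ_self n)]

theorem qPoch_succ (a : ℝ) (n : ℕ) : qPoch a q (n + 1) = qPoch a q n * (1 - a * q ^ n) :=
  prod_range_succ _ _

theorem qPoch_add_two (a : ℝ) (n : ℕ) :
    qPoch a q (n + 2) = (1 - a) * (1 - a * q) * qPoch (a * q ^ 2) q n := by
  simp only [qPoch, prod_range_succ' _ (n + 1), prod_range_succ' _ n]
  rw [prod_congr rfl fun j _ => by rw [show a * q ^ (j + 1 + 1) = a * q ^ 2 * q ^ j by ring]]
  ring

theorem qPoch_ne_zero {a : ℝ} (ha : ∀ j, a * q ^ j ≠ 1) (n : ℕ) : qPoch a q n ≠ 0 :=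
  prod_ne_zero_iff.mpr fun j _ => sub_ne_zero.mpr (ha j).symm

theorem qHermite_succ_succ (n : ℕ) (x : ℝ) :
    qHermite q (n + 2) x = x * qHermite q (n + 1) x - qNat q (n + 1) * qHermite q n x := rfl

-- At `n = 0` the truncated index `n - 1` is harmless: its coefficient is `[0]_q = 0`.
theorem mul_qHermite (n : ℕ) (x : ℝ) :
    x * qHermite q n x = qHermite q (n + 1) x + qNat q n * qHermite q (n - 1) x := by
  cases n with
  | zero => simp [qHermite, qNat]
  | succ n => rw [qHermite_succ_succ, Nat.add_sub_cancel]; ring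

theorem ascP_succ_succ (y r : ℝ) (n : ℕ) (x : ℝ) :
    ascP q y r (n + 2) x = (x - r * y * q ^ (n + 1)) * ascP q y r (n + 1) x -
      qNat q (n + 1) * (1 - r ^ 2 * q ^ n) * ascP q y r n x := rfl

def omegaScaled (q x y r : ℝ) : ℝ :=
  (1 - r ^ 2) ^ 2 - r * (1 + r ^ 2) * (1 - q) * (x * y) + r ^ 2 * (1 - q) * (x ^ 2 + y ^ 2)

theorem omegaPM_mul_sqrt (hq : q ≤ 1) (x y r : ℝ) :
    omegaPM (x * √(1 - q) / 2) (y * √(1 - q) / 2) r = omegaScaled q x y r := by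
  have h : √(1 - q) ^ 2 = 1 - q := Real.sq_sqrt (by linarith)
  rw [omegaPM, omegaScaled]
  linear_combination (-(r * (1 + r ^ 2) * x * y) + r ^ 2 * (x ^ 2 + y ^ 2)) * h

theorem omegaScaled_mul_ascP (x y r : ℝ) (m : ℕ) :
    omegaScaled q x y r * ascP q y (r * q) m x =
      (1 - r ^ 2 * q ^ m) * (1 - r ^ 2 * q ^ (m + 1)) * ascP q y r m x
      - (1 - q) * r * (1 - r ^ 2 * q ^ (m + 1)) * y * ascP q y r (m + 1) x
      + (1 - q) * r ^ 2 * ascP q y r (m + 2) x := by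
  induction m using Nat.twoStepInduction with
  | zero => simp [ascP, omegaScaled, qNat]; ring
  | one => simp [ascP, omegaScaled, qNat, sum_range_succ]; ring
  | more k ih0 ih1 =>
    have hx1 := ascP_succ_succ (q := q) y r k x
    have hx2 := ascP_succ_succ (q := q) y r (k + 1) x
    have hx3 := ascP_succ_succ (q := q) y r (k + 2) x
    rw [qNat_succ] at hx2
    rw [qNat_succ, qNat_succ] at hx3
    rw [ascP_succ_succ]
    linear_combination (x - r * q * y * q ^ (k + 1)) * ih1
      - (qNat q (k + 1) * (1 - (r * q) ^ 2 * q ^ k)) * ih0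
      - ((1 - r ^ 2 * q ^ (k + 1)) * (1 - r ^ 2 * q ^ (k + 2))) * hx1
      + ((1 - q) * r * y * (1 - r ^ 2 * q ^ (k + 2))) * hx2
      - ((1 - q) * r ^ 2) * hx3

def normalizedAscP (q y r : ℝ) (n : ℕ) (x : ℝ) : ℝ := ascP q y r n x / qPoch (r ^ 2) q n

theorem omegaScaled_mul_normalizedAscP {r : ℝ} (hr : ∀ j, r ^ 2 * q ^ j ≠ 1) (x y : ℝ)
    (m : ℕ) :
    omegaScaled q x y r * normalizedAscP q y (r * q) m x =
      (1 - r ^ 2) * (1 - r ^ 2 * q) * (normalizedAscP q y r m x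
        - (1 - q) * r * y * normalizedAscP q y r (m + 1) x
        + (1 - q) * r ^ 2 * normalizedAscP q y r (m + 2) x) := by
  have hpoch :
      qPoch (r ^ 2) q (m + 2) = (1 - r ^ 2) * (1 - r ^ 2 * q) * qPoch ((r * q) ^ 2) q m := by
    rw [qPoch_add_two, mul_pow]
  have hpoch' : qPoch (r ^ 2) q (m + 2) =
      qPoch (r ^ 2) q m * (1 - r ^ 2 * q ^ m) * (1 - r ^ 2 * q ^ (m + 1)) := by
    rw [qPoch_succ, qPoch_succ]
  have h0 := qPoch_ne_zero hr m
  have h1 := sub_ne_zero.mpr (hr m).symm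
  have h2 := sub_ne_zero.mpr (hr (m + 1)).symm
  have hφ : (1 - r ^ 2) * (1 - r ^ 2 * q) ≠ 0 := by
    refine mul_ne_zero (sub_ne_zero.mpr ?_) (sub_ne_zero.mpr ?_)
    · simpa using (hr 0).symm
    · simpa using (hr 1).symm
  have hP : qPoch ((r * q) ^ 2) q m =
      qPoch (r ^ 2) q m * (1 - r ^ 2 * q ^ m) * (1 - r ^ 2 * q ^ (m + 1)) /
        ((1 - r ^ 2) * (1 - r ^ 2 * q)) := by
    rw [eq_div_iff hφ]
    linear_combination hpoch' - hpoch
  simp only [normalizedAscP, qPoch_succ, hP]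
  field_simp
  linear_combination (1 - r ^ 2) * (1 - r ^ 2 * q) * omegaScaled_mul_ascP (q := q) x y r m

def qpolyTerm (q r : ℝ) (i j s : ℕ) (x y : ℝ) : ℝ :=
  r ^ s * qHermite q (j - s) y * normalizedAscP q y r (i + s) x

theorem Qpoly_eq_sum (r : ℝ) (i j : ℕ) (x y : ℝ) :
    Qpoly q r i j x y = ∑ s ∈ range (j + 1), altQBinom q j s * qpolyTerm q r i j s x y := by
  refine sum_congr rfl fun s _ => ?_
  rw [altQBinom, qpolyTerm, normalizedAscP]
  ring

theorem omegaScaled_mul_Qpoly (hq : -1 < q) {r : ℝ} (hr : ∀ j, r ^ 2 * q ^ j ≠ 1)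
    (i j : ℕ) (x y : ℝ) :
    omegaScaled q x y r * Qpoly q (r * q) i j x y =
      (1 - r ^ 2) * (1 - r ^ 2 * q) *
        (Qpoly q r i j x y - (1 - q) * r * Qpoly q r (i + 1) (j + 1) x y) := by
  set u := fun s => qpolyTerm q r i j s x y
  set v := fun s => qpolyTerm q r (i + 1) (j + 1) s x y
  have hterm : ∀ s ∈ range (j + 1),
      omegaScaled q x y r * (altQBinom q j s * qpolyTerm q (r * q) i j s x y) =
        (1 - r ^ 2) * (1 - r ^ 2 * q) *
          ((q ^ s * altQBinom q j s * u s + altQBinom q j (s + 1) * (1 - q ^ (s + 1)) * u (s + 1))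
            - (1 - q) * r * (q ^ s * altQBinom q j s * (v s - v (s + 1)))) := by
    -- Expand by the three-term relation for `normalizedAscP` and the recurrence for `y H_{j-s}`;
    -- by `altQBinom_succ_mul_one_sub_pow` the `[j-s]_q H_{j-s-1}` part is the `u (s + 1)` term.
    intro s hs
    have hsj : s ≤ j := Nat.lt_succ_iff.mp (mem_range.mp hs)
    simp only [u, v, qpolyTerm, altQBinom_succ_mul_one_sub_pow hq,
      show j + 1 - s = j - s + 1 by omega, show j - (s + 1) = j - s - 1 by omega,
      show j + 1 - (s + 1) = j - s by omega, show i + (s + 1) = i + s + 1 by omega,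
      show i + 1 + s = i + s + 1 by omega, show i + 1 + (s + 1) = i + s + 2 by omega]
    linear_combination (altQBinom q j s * (r * q) ^ s * qHermite q (j - s) y) *
        omegaScaled_mul_normalizedAscP hr x y (i + s)
      - (1 - r ^ 2) * (1 - r ^ 2 * q) * altQBinom q j s * q ^ s * r ^ (s + 1) * (1 - q) *
        normalizedAscP q y r (i + s + 1) x * mul_qHermite (q := q) (j - s) y
  have hu : ∑ s ∈ range (j + 1),
      (q ^ s * altQBinom q j s * u s + altQBinom q j (s + 1) * (1 - q ^ (s + 1)) * u (s + 1)) =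
        Qpoly q r i j x y := by
    refine (sum_mul_add_mul_succ_eq_sum_mul (a := altQBinom q j)
      (b := fun s => q ^ s * altQBinom q j s)
      (e := fun s => altQBinom q j (s + 1) * (1 - q ^ (s + 1)))
      j (by simp) (fun s => by ring) (by simp [altQBinom_of_lt (Nat.lt_succ_self j)])).trans ?_
    rw [sum_range_succ, altQBinom_of_lt (Nat.lt_succ_self j), zero_mul, add_zero, Qpoly_eq_sum]
  have hv : ∑ s ∈ range (j + 1), q ^ s * altQBinom q j s * (v s - v (s + 1)) =
      Qpoly q r (i + 1) (j + 1) x y := by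
    rw [sum_altQBinom_mul_sub hq, Qpoly_eq_sum]
  rw [Qpoly_eq_sum, mul_sum, sum_congr rfl hterm, ← mul_sum, sum_sub_distrib, ← mul_sum, hu, hv]

theorem prod_omegaScaled (hq : -1 < q) (x y : ℝ) (n : ℕ) {r : ℝ}
    (hr : ∀ j, r ^ 2 * q ^ j ≠ 1) :
    ∏ j ∈ range n, omegaScaled q x y (r * q ^ j) =
      qPoch (r ^ 2) q (2 * n) *
        ∑ k ∈ range (n + 1), altQBinom q n k * (((1 - q) * r) ^ k * Qpoly q r k k x y) := by
  induction n generalizing r with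
  | zero => simp [qPoch, Qpoly, altQBinom_zero_right hq, qBinom_zero_right hq, qHermite, ascP]
  | succ n ih =>
    have hrq : ∀ j, (r * q) ^ 2 * q ^ j ≠ 1 := fun j => by
      rw [show (r * q) ^ 2 * q ^ j = r ^ 2 * q ^ (j + 2) by ring]
      exact hr _
    set w := fun k => ((1 - q) * r) ^ k * Qpoly q r k k x y
    calc ∏ j ∈ range (n + 1), omegaScaled q x y (r * q ^ j)
        = omegaScaled q x y r * ∏ j ∈ range n, omegaScaled q x y (r * q * q ^ j) := by
          rw [prod_range_succ', mul_comm]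
          simp only [pow_succ, pow_zero, mul_one, mul_assoc, mul_comm q]
      _ = qPoch ((r * q) ^ 2) q (2 * n) * ((1 - r ^ 2) * (1 - r ^ 2 * q)) *
            ∑ k ∈ range (n + 1), q ^ k * altQBinom q n k * (w k - w (k + 1)) := by
          rw [ih hrq, mul_left_comm, mul_assoc]
          congr 1
          rw [mul_sum, mul_sum]
          refine sum_congr rfl fun k _ => ?_
          rw [show ∀ c X Q : ℝ,
              omegaScaled q x y r * (c * (X * Q)) = c * X * (omegaScaled q x y r * Q) by
            intros; ring, omegaScaled_mul_Qpoly hq hr]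
          simp only [w, pow_succ, mul_pow]
          ring
      _ = qPoch (r ^ 2) q (2 * (n + 1)) *
            ∑ k ∈ range (n + 1 + 1), altQBinom q (n + 1) k * w k := by
          rw [sum_altQBinom_mul_sub hq, mul_add_one, qPoch_add_two, mul_pow]
          ring

end

/-- ∏_{j=0}^{n-1} ω(x√(1-q)/2, y√(1-q)/2 | ρ q^j)
= (ρ²;q)_{2n} Σ_{k=0}^n (-1)^k [n choose k]_q q^{k(k-1)/2} (1-q)^k ρ^k Q_{k,k}(x,y|ρ,q). -/
theorem statement11 (q ρ : ℝ) (hq : |q| < 1) (hρ : |ρ| < 1) (n : ℕ) (x y : ℝ) :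
    (∏ j ∈ Finset.range n,
        omegaPM (x * Real.sqrt (1 - q) / 2) (y * Real.sqrt (1 - q) / 2) (ρ * q ^ j)) =
      qPoch (ρ ^ 2) q (2 * n) *
        ∑ k ∈ Finset.range (n + 1),
          (-1 : ℝ) ^ k * qBinom q n k * q ^ (k * (k - 1) / 2) * (1 - q) ^ k * ρ ^ k *
            Qpoly q ρ k k x y := by
  obtain ⟨hq_gt, hq_lt⟩ := abs_lt.mp hq
  have hρq : ∀ j, ρ ^ 2 * q ^ j ≠ 1 := fun j => by
    refine ne_of_lt (lt_of_abs_lt ?_)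
    rw [abs_mul, abs_pow, abs_pow]
    exact mul_lt_one_of_nonneg_of_lt_one_left (by positivity)
      (pow_lt_one₀ (abs_nonneg ρ) hρ two_ne_zero) (pow_le_one₀ (abs_nonneg q) hq.le)
  simp only [omegaPM_mul_sqrt hq_lt.le, prod_omegaScaled hq_gt x y n hρq]
  refine congrArg _ (sum_congr rfl fun k _ => ?_)
  rw [altQBinom, mul_pow]
  ring
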